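/- Let ρ ∈ Matrix (Fin d) (Fin d) ℂ be positive definite with trace 1, let A be a measurement with n outcomes on ℂ^d all of whose effects are nonzero, and let λ ∈ [0,1]. Define the noisy measurement A^{(λ)} by A^{(λ)} x = (λ : ℂ) • A x + ((1 − λ) : ℂ) • (Matrix.trace (ρ * A x)) • 1; this is again a measurement with nonzero effects. Then F_ρ(A^{(λ)}) = (λ² : ℂ) • F_ρ(A) + ((1 − λ²) : ℂ) • |ρ^{1/2}⟩⟨ρ^{1/2}|. -/

import Mathlib

open Matrix
open scoped Kronecker ComplexOrder

noncomputable section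

/-- The square root of a positive semidefinite matrix, with its former Mathlib definition. -/
def Matrix.PosSemidef.sqrt {n 𝕜 : Type*} [Fintype n] [RCLike 𝕜] [DecidableEq n]
    {A : Matrix n n 𝕜} (hA : A.PosSemidef) : Matrix n n 𝕜 :=
  hA.1.eigenvectorUnitary.1 * diagonal ((↑) ∘ (√·) ∘ hA.1.eigenvalues) *
    (star hA.1.eigenvectorUnitary : Matrix n n 𝕜)

/-- A measurement (POVM): a finite family of positive semidefinite matrices summing to `1`. -/
def IsMeasurement {ι κ : Type*} [Fintype ι] [DecidableEq ι] [Fintype κ]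
    (A : κ → Matrix ι ι ℂ) : Prop :=
  (∀ x, (A x).PosSemidef) ∧ ∑ x, A x = 1

/-- `A` is a post-processing of `B`: `A ⪯ B`. -/
def PostProc {ι : Type*} {n m : ℕ}
    (A : Fin n → Matrix ι ι ℂ) (B : Fin m → Matrix ι ι ℂ) : Prop :=
  ∃ μ : Fin n → Fin m → ℝ,
    (∀ x y, 0 ≤ μ x y) ∧ (∀ y, ∑ x, μ x y = 1) ∧
    (∀ x, A x = ∑ y, (μ x y : ℂ) • B y)

/-- The outer product `|E⟩⟨F|` of the vectorizations of two matrices. -/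
def outerProd {ι : Type*} (E F : Matrix ι ι ℂ) : Matrix (ι × ι) (ι × ι) ℂ :=
  Matrix.of fun p q => E p.1 p.2 * star (F q.1 q.2)

/-- The (un-normalized) Fisher information map of a measurement. -/
noncomputable def Fisher {ι κ : Type*} [Fintype ι] [Fintype κ]
    (A : κ → Matrix ι ι ℂ) : Matrix (ι × ι) (ι × ι) ℂ :=
  ∑ x, (Matrix.trace (A x))⁻¹ • outerProd (A x) (A x)

/-- The generalized Fisher information map of a measurement, relative to a
positive definite state `ρ` (with positive semidefinite square root `ρ^{1/2}`). -/
noncomputable def FisherRho {ι κ : Type*} [Fintype ι] [DecidableEq ι] [Fintype κ]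
    {ρ : Matrix ι ι ℂ} (hρ : ρ.PosDef) (A : κ → Matrix ι ι ℂ) :
    Matrix (ι × ι) (ι × ι) ℂ :=
  ∑ x, (Matrix.trace (ρ * A x))⁻¹ •
    outerProd (hρ.posSemidef.sqrt * A x) (hρ.posSemidef.sqrt * A x)

/-- The height of a finite family of self-adjoint matrices: the infimum of the traces of
Hermitian matrices dominating every member in the Loewner order. -/
noncomputable def height {ι κ : Type*} [Fintype ι] [Fintype κ]
    (X : κ → Matrix ι ι ℂ) : ℝ :=
  sInf { t : ℝ | ∃ H : Matrix ι ι ℂ, H.IsHermitian ∧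
    (∀ i, (H - X i).PosSemidef) ∧ t = (Matrix.trace H).re }

/-!
Noise leaves the outcome probabilities `tr (ρ A x)` unchanged (as `tr ρ = 1`), and
`ρ^{1/2} A^{(λ)} x = λ ρ^{1/2} A x + (1 - λ) tr (ρ A x) ρ^{1/2}`. Expanding the outer product
sesquilinearly, the cross terms sum, via `∑ x, A x = 1`, to `2λ(1 - λ) |ρ^{1/2}⟩⟨ρ^{1/2}|`, and
the pure noise terms, via `∑ x, tr (ρ A x) = 1`, to `(1 - λ)² |ρ^{1/2}⟩⟨ρ^{1/2}|`; finally
`2λ(1 - λ) + (1 - λ)² = 1 - λ²`.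
-/

open scoped MatrixOrder in
theorem Matrix.PosDef.trace_mul_pos {n 𝕜 : Type*} [Fintype n] [RCLike 𝕜] {ρ B : Matrix n n 𝕜} (hρ : ρ.PosDef) (hB : B.PosSemidef)
    (hB0 : B ≠ 0) : 0 < trace (ρ * B) := by
  classical
  -- With `B = Cᴴ C`, `tr (ρ B) = tr (C ρ Cᴴ)`, and `C ρ Cᴴ = 0` forces `Cᴴ = 0` as `ρ` is definite.
  obtain ⟨C, rfl⟩ := CStarAlgebra.nonneg_iff_eq_star_mul_self.mp hB.nonneg
  rw [star_eq_conjTranspose, ← Matrix.mul_assoc, trace_mul_cycle]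
  have hCρC : (C * ρ * Cᴴ).PosSemidef := hρ.posSemidef.mul_mul_conjTranspose_same C
  refine hCρC.trace_nonneg.lt_of_ne' fun h => hB0 ?_
  have hC : Cᴴ = 0 := by
    refine Matrix.ext_iff_mulVec.mpr fun x => ?_
    rw [zero_mulVec]
    by_contra hx
    have := hρ.dotProduct_mulVec_pos hx
    rw [star_mulVec, dotProduct_mulVec, vecMul_vecMul, ← dotProduct_mulVec, mulVec_mulVec,
      conjTranspose_conjTranspose, hCρC.trace_eq_zero_iff.mp h] at this
    simp at this
  rw [star_eq_conjTranspose, hC, Matrix.zero_mul]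

section OuterProd

variable {ι : Type*}

theorem outerProd_add_left (E E' F : Matrix ι ι ℂ) :
    outerProd (E + E') F = outerProd E F + outerProd E' F := by
  ext p q
  simp [outerProd, add_mul]

theorem outerProd_add_right (E F F' : Matrix ι ι ℂ) :
    outerProd E (F + F') = outerProd E F + outerProd E F' := by
  ext p q
  simp [outerProd, mul_add]

theorem outerProd_smul_left (c : ℂ) (E F : Matrix ι ι ℂ) :
    outerProd (c • E) F = c • outerProd E F := by
  ext p q
  simp [outerProd, mul_assoc]

theorem outerProd_smul_right (c : ℂ) (E F : Matrix ι ι ℂ) :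
    outerProd E (c • F) = star c • outerProd E F := by
  ext p q
  simp [outerProd, mul_left_comm]

theorem outerProd_sum_left {κ : Type*} [Fintype κ] (E : κ → Matrix ι ι ℂ) (F : Matrix ι ι ℂ) :
    outerProd (∑ x, E x) F = ∑ x, outerProd (E x) F := by
  ext p q
  simp [outerProd, Matrix.sum_apply, Finset.sum_mul]

theorem outerProd_sum_right {κ : Type*} [Fintype κ] (E : Matrix ι ι ℂ) (F : κ → Matrix ι ι ℂ) :
    outerProd E (∑ x, F x) = ∑ x, outerProd E (F x) := by
  ext p q
  simp [outerProd, Matrix.sum_apply, Finset.mul_sum]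

end OuterProd

section NoisyMeasurement

variable {ι κ : Type*} [Fintype ι] [DecidableEq ι]

def noisyMeasurement (ρ : Matrix ι ι ℂ) (lam : ℝ) (A : κ → Matrix ι ι ℂ) (x : κ) :
    Matrix ι ι ℂ :=
  (lam : ℂ) • A x + ((1 - lam : ℝ) : ℂ) • Matrix.trace (ρ * A x) • 1

variable {ρ : Matrix ι ι ℂ} {A : κ → Matrix ι ι ℂ}

theorem sum_trace_mul_eq_one [Fintype κ] (hρ1 : trace ρ = 1) (hA1 : ∑ x, A x = 1) :
    ∑ x, trace (ρ * A x) = 1 := by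
  rw [← trace_sum, ← Matrix.mul_sum, hA1, Matrix.mul_one, hρ1]

theorem trace_mul_noisyMeasurement (hρ1 : trace ρ = 1) (lam : ℝ) (x : κ) :
    trace (ρ * noisyMeasurement ρ lam A x) = trace (ρ * A x) := by
  simp only [noisyMeasurement, Matrix.mul_add, Matrix.mul_smul, trace_add,
    trace_smul, hρ1, smul_eq_mul, mul_one]
  push_cast
  ring

theorem noisyMeasurement_ne_zero (hρ1 : trace ρ = 1) (lam : ℝ) {x : κ}
    (hx : trace (ρ * A x) ≠ 0) : noisyMeasurement ρ lam A x ≠ 0 := by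
  intro h
  rw [← trace_mul_noisyMeasurement hρ1 lam, h, Matrix.mul_zero, trace_zero] at hx
  exact hx rfl

theorem isMeasurement_noisyMeasurement [Fintype κ] (hρ1 : trace ρ = 1) (hA : IsMeasurement A)
    (ht : ∀ x, 0 ≤ trace (ρ * A x)) {lam : ℝ} (hl0 : 0 ≤ lam) (hl1 : lam ≤ 1) :
    IsMeasurement (noisyMeasurement ρ lam A) := by
  have hl0' : (0 : ℂ) ≤ lam := by exact_mod_cast hl0
  have hl1' : (0 : ℂ) ≤ ((1 - lam : ℝ) : ℂ) := by exact_mod_cast sub_nonneg.mpr hl1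
  refine ⟨fun x => ?_, ?_⟩
  · rw [noisyMeasurement, smul_smul]
    exact ((hA.1 x).smul hl0').add (PosSemidef.one.smul (mul_nonneg hl1' (ht x)))
  · simp only [noisyMeasurement, Finset.sum_add_distrib, ← Finset.smul_sum, ← Finset.sum_smul,
      hA.2, sum_trace_mul_eq_one hρ1 hA.2, one_smul, ← add_smul]
    push_cast
    simp

theorem trace_inv_smul_outerProd_mul_noisyMeasurement (hρ1 : trace ρ = 1) (S : Matrix ι ι ℂ)
    (lam : ℝ) {x : κ} (hx : 0 < trace (ρ * A x)) :
    (trace (ρ * noisyMeasurement ρ lam A x))⁻¹ •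
      outerProd (S * noisyMeasurement ρ lam A x) (S * noisyMeasurement ρ lam A x) =
    ((lam ^ 2 : ℝ) : ℂ) • ((trace (ρ * A x))⁻¹ • outerProd (S * A x) (S * A x)) +
      ((lam * (1 - lam) : ℝ) : ℂ) • (outerProd (S * A x) S + outerProd S (S * A x)) +
      (((1 - lam) ^ 2 : ℝ) : ℂ) • (trace (ρ * A x) • outerProd S S) := by
  have hstar : star (trace (ρ * A x)) = trace (ρ * A x) :=
    Complex.conj_eq_iff_im.mpr (Complex.nonneg_iff.mp hx.le).2.symm
  rw [trace_mul_noisyMeasurement hρ1]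
  simp only [noisyMeasurement, Matrix.mul_add, Matrix.mul_smul, Matrix.mul_one, outerProd_add_left,
    outerProd_add_right, outerProd_smul_left, outerProd_smul_right, hstar,
    Complex.star_def, Complex.conj_ofReal]
  match_scalars <;> field_simp [hx.ne']

theorem fisherRho_noisyMeasurement [Fintype κ] (hρ : ρ.PosDef) (hρ1 : trace ρ = 1)
    (hA1 : ∑ x, A x = 1) (ht : ∀ x, 0 < trace (ρ * A x)) (lam : ℝ) :
    FisherRho hρ (noisyMeasurement ρ lam A) = ((lam ^ 2 : ℝ) : ℂ) • FisherRho hρ A +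
      ((1 - lam ^ 2 : ℝ) : ℂ) • outerProd hρ.posSemidef.sqrt hρ.posSemidef.sqrt := by
  simp only [FisherRho, trace_inv_smul_outerProd_mul_noisyMeasurement hρ1 _ lam (ht _),
    Finset.sum_add_distrib, ← Finset.smul_sum, ← Finset.sum_smul, ← outerProd_sum_left,
    ← outerProd_sum_right, ← Matrix.mul_sum, hA1, Matrix.mul_one, sum_trace_mul_eq_one hρ1 hA1,
    one_smul]
  match_scalars <;> ring

end NoisyMeasurement

/-- Effect of noise on the generalized Fisher information matrix. -/
theorem stmt9 {d n : ℕ} {ρ : Matrix (Fin d) (Fin d) ℂ} (hρ : ρ.PosDef)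
    (hρtr : Matrix.trace ρ = 1)
    (A : Fin n → Matrix (Fin d) (Fin d) ℂ) (hA : IsMeasurement A) (hA0 : ∀ x, A x ≠ 0)
    (lam : ℝ) (hl0 : 0 ≤ lam) (hl1 : lam ≤ 1)
    (Alam : Fin n → Matrix (Fin d) (Fin d) ℂ)
    (hAlam : ∀ x, Alam x =
      (lam : ℂ) • A x + ((1 - lam : ℝ) : ℂ) • Matrix.trace (ρ * A x) • 1) :
    IsMeasurement Alam ∧ (∀ x, Alam x ≠ 0) ∧
    FisherRho hρ Alam = ((lam ^ 2 : ℝ) : ℂ) • FisherRho hρ A +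
      ((1 - lam ^ 2 : ℝ) : ℂ) • outerProd hρ.posSemidef.sqrt hρ.posSemidef.sqrt := by
  obtain rfl : Alam = noisyMeasurement ρ lam A := funext hAlam
  have ht : ∀ x, 0 < trace (ρ * A x) := fun x => hρ.trace_mul_pos (hA.1 x) (hA0 x)
  exact ⟨isMeasurement_noisyMeasurement hρtr hA (fun x => (ht x).le) hl0 hl1,
    fun x => noisyMeasurement_ne_zero hρtr lam (ht x).ne',
    fisherRho_noisyMeasurement hρ hρtr hA.2 ht lam⟩
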